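/- Suppose ⟨I_δ : δ ∈ S⟩ is a family of ideals indexed by a set S of ordinals below κ, each I_δ an ideal on a set C_δ ⊆ δ, and each I_δ is σ-indecomposable for a fixed regular uncountable σ. Define A ∈ I iff there exists a club E ⊆ κ such that for all δ ∈ E ∩ S, A ∩ E ∩ C_δ ∈ I_δ. If σ < κ and κ is regular uncountable, then I is σ-indecomposable: any union of a ⊆-increasing σ-sequence of sets in I is in I. -/

import Mathlib

/-- `E` is a closed unbounded subset of (the ordinals below) `κ`. -/
def IsClubIn (E : Set Ordinal) (κ : Ordinal) : Prop :=
  E ⊆ Set.Iio κ ∧ (∀ a < κ, ∃ b ∈ E, a ≤ b) ∧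
    (∀ a < κ, a ≠ 0 → sSup (E ∩ Set.Iio a) = a → a ∈ E)

/-- Membership in the ideal `I = id_p(C̄, Ī)` on `κ`. -/
def MemIdP (κ : Ordinal) (S : Set Ordinal) (C : Ordinal → Set Ordinal)
    (I : Ordinal → Set (Set Ordinal)) (A : Set Ordinal) : Prop :=
  ∃ E, IsClubIn E κ ∧ ∀ δ ∈ E ∩ S, A ∩ E ∩ C δ ∈ I δ

/-!
The ideal `I` is witnessed by clubs, so the union of an increasing `σ`-sequence `A i ∈ I`
is witnessed by the intersection `E` of the `σ` witnessing clubs `E i`, which is again club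
because `σ < κ` and `κ` is regular uncountable. At every `δ ∈ E ∩ S` the trace of the union
is the increasing union of the traces `A i ∩ E ∩ C δ ⊆ A i ∩ E i ∩ C δ ∈ I δ`, hence lies in
`I δ` by `σ`-indecomposability of `I δ`.
-/

universe u

open Set Ordinal

lemma sSup_inter_Iio_eq_of_subset {T E : Set Ordinal.{u}} {a : Ordinal.{u}} (hTE : T ⊆ E)
    (ha : a ≠ 0) (hT : sSup (T ∩ Iio a) = a) : sSup (E ∩ Iio a) = a := by
  have hne : (T ∩ Iio a).Nonempty := by
    by_contra h
    rw [not_nonempty_iff_eq_empty.1 h, csSup_empty] at hT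
    exact ha hT.symm
  refine le_antisymm (csSup_le (hne.mono (inter_subset_inter_left _ hTE)) fun x hx => hx.2.le) ?_
  calc a = sSup (T ∩ Iio a) := hT.symm
    _ ≤ sSup (E ∩ Iio a) :=
      csSup_le_csSup ⟨a, fun x hx => hx.2.le⟩ hne (inter_subset_inter_left _ hTE)

lemma IsClubIn.iSup_mem {E : Set Ordinal.{u}} {κ : Ordinal.{u}} (hE : IsClubIn E κ)
    {f : ℕ → Ordinal.{u}} (hf : ∀ n, ∃ b ∈ E, f n ≤ b ∧ b < f (n + 1)) (hlt : ⨆ n, f n < κ) :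
    ⨆ n, f n ∈ E := by
  choose b hbE hfb hbf using hf
  have hbs : ∀ n, b n ∈ E ∩ Iio (⨆ n, f n) :=
    fun n => ⟨hbE n, (hbf n).trans_le (Ordinal.le_iSup f _)⟩
  refine hE.2.2 _ hlt (hbs 0).2.ne_bot (le_antisymm ?_ ?_)
  · exact csSup_le ⟨_, hbs 0⟩ fun x hx => hx.2.le
  · exact Ordinal.iSup_le fun n => (hfb n).trans (le_csSup ⟨_, fun x hx => hx.2.le⟩ (hbs n))

section RegularCardinal

variable {κ : Cardinal.{u}} (hκ : κ.IsRegular) {ι : Type u} (hι : Cardinal.mk ι < κ)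
  {E : ι → Set Ordinal.{u}}
include hκ hι

lemma exists_lt_ord_forall_exists_mem_Ico (hE : ∀ i, IsClubIn (E i) κ.ord) {c : Ordinal.{u}}
    (hc : c < κ.ord) : ∃ d < κ.ord, ∀ i, ∃ b ∈ E i, c ≤ b ∧ b < d := by
  choose b hbE hcb using fun i => (hE i).2.1 c hc
  refine ⟨⨆ i, (b i + 1), iSup_add_one_lt_of_lt_cof (by rwa [hκ.cof_ord])
    fun i => (hE i).1 (hbE i), fun i => ⟨b i, hbE i, hcb i, ?_⟩⟩
  exact (lt_add_one (b i)).trans_le (Ordinal.le_iSup (fun i => b i + 1) i)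

lemma forall_exists_mem_iInter_le (hκ₀ : κ ≠ Cardinal.aleph0)
    (hE : ∀ i, IsClubIn (E i) κ.ord) : ∀ a < κ.ord, ∃ b ∈ ⋂ i, E i, a ≤ b := by
  intro a ha
  have hnext : ∀ c, ∃ d, c < κ.ord → d < κ.ord ∧ ∀ i, ∃ b ∈ E i, c ≤ b ∧ b < d := fun c =>
    if hc : c < κ.ord then (exists_lt_ord_forall_exists_mem_Ico hκ hι hE hc).imp fun _ hd _ => hd
    else ⟨0, fun h => absurd h hc⟩
  choose g hg using hnext
  -- `nfp g a` is the supremum of the iterates `g^[n] a`, which every `E i` interleaves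
  have hlt : nfp g a < κ.ord :=
    Cardinal.nfp_lt_ord_of_isRegular hκ hκ₀ (fun c hc => (hg c hc).1) ha
  have hiter : ∀ n, g^[n] a < κ.ord := fun n => (iterate_le_nfp g a n).trans_lt hlt
  refine ⟨nfp g a, mem_iInter.2 fun i => ?_, le_nfp g a⟩
  rw [← iSup_iterate_eq_nfp] at hlt ⊢
  refine (hE i).iSup_mem (fun n => ?_) hlt
  rw [Function.iterate_succ_apply']
  exact (hg _ (hiter n)).2 i

lemma isClubIn_iInter [Nonempty ι] (hκ₀ : κ ≠ Cardinal.aleph0)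
    (hE : ∀ i, IsClubIn (E i) κ.ord) : IsClubIn (⋂ i, E i) κ.ord :=
  ⟨(iInter_subset _ (Classical.arbitrary ι)).trans (hE _).1,
    forall_exists_mem_iInter_le hκ hι hκ₀ hE, fun a ha ha₀ hsup =>
      mem_iInter.2 fun i =>
        (hE i).2.2 a ha ha₀ (sSup_inter_Iio_eq_of_subset (iInter_subset _ i) ha₀ hsup)⟩

end RegularCardinal

theorem stmt2_general (κ σ : Cardinal) (hκreg : κ.IsRegular)
    (hκunc : Cardinal.aleph0 < κ)
    (hσreg : σ.IsRegular) (hσκ : σ < κ)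
    (S : Set Ordinal)
    (C : Ordinal → Set Ordinal)
    (I : Ordinal → Set (Set Ordinal))
    (hIdown : ∀ δ ∈ S, ∀ A B : Set Ordinal, A ⊆ B → B ∈ I δ → A ∈ I δ)
    (hIind : ∀ δ ∈ S, ∀ B : σ.ord.ToType → Set Ordinal, Monotone B →
      (∀ i, B i ∈ I δ) → (⋃ i, B i) ∈ I δ)
    (A : σ.ord.ToType → Set Ordinal) (hmono : Monotone A)
    (hA : ∀ i, MemIdP κ.ord S C I (A i)) :
    MemIdP κ.ord S C I (⋃ i, A i) := by
  have : Nonempty σ.ord.ToType :=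
    nonempty_toType_iff.2 (Cardinal.ord_eq_zero.not.2 hσreg.pos.ne')
  choose E hEclub hE using hA
  have hσ : Cardinal.mk σ.ord.ToType < κ := by rwa [Cardinal.mk_toType, Cardinal.card_ord]
  refine ⟨⋂ i, E i, isClubIn_iInter hκreg hσ hκunc.ne' hEclub, fun δ hδ => ?_⟩
  rw [iUnion_inter, iUnion_inter]
  refine hIind δ hδ.2 _ (fun i j hij => by gcongr; exact hmono hij) fun i => ?_
  refine hIdown δ hδ.2 _ _ ?_ (hE i δ ⟨mem_iInter.1 hδ.1 i, hδ.2⟩)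
  gcongr
  exact iInter_subset _ i

/-- if each `I_δ` is `σ`-indecomposable (σ regular uncountable,
σ < κ, κ regular uncountable), then the ideal `I` is `σ`-indecomposable. -/
theorem stmt2 (κ σ : Cardinal) (hκreg : κ.IsRegular)
    (hκunc : Cardinal.aleph0 < κ)
    (hσreg : σ.IsRegular) (hσunc : Cardinal.aleph0 < σ) (hσκ : σ < κ)
    (S : Set Ordinal) (hS : S ⊆ Set.Iio κ.ord)
    (C : Ordinal → Set Ordinal) (hC : ∀ δ ∈ S, C δ ⊆ Set.Iio δ)
    (I : Ordinal → Set (Set Ordinal))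
    (hIdown : ∀ δ ∈ S, ∀ A B : Set Ordinal, A ⊆ B → B ∈ I δ → A ∈ I δ)
    (hIunion : ∀ δ ∈ S, ∀ A B : Set Ordinal, A ∈ I δ → B ∈ I δ → A ∪ B ∈ I δ)
    (hIind : ∀ δ ∈ S, ∀ B : σ.ord.ToType → Set Ordinal, Monotone B →
      (∀ i, B i ∈ I δ) → (⋃ i, B i) ∈ I δ)
    (A : σ.ord.ToType → Set Ordinal) (hmono : Monotone A)
    (hA : ∀ i, MemIdP κ.ord S C I (A i)) :
    MemIdP κ.ord S C I (⋃ i, A i) :=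
  stmt2_general κ σ hκreg hκunc hσreg hσκ S C I hIdown hIind A hmono hA
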